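/- Suppose a : (0, t₀] → (0,∞) is differentiable, strictly increasing, with a(t) → 0 as t → 0⁺, and suppose there is A > 0 with a(t)^{−n}·ȧ(t) ≤ A for all t ∈ (0,t₀], where n ≤ 0. If n < 0, then the horizon integral I = ∫_0^{t₀} c₀ a(t)ⁿ / a(t) dt diverges (equals +∞). In particular there is no past particle horizon. -/

import Mathlib

/-!
Put `m = 1 - n > 0`. The bound `a^{-n} ȧ ≤ A` says that `(a^m)' = m a^{-n} ȧ ≤ m A`, and since
`a^m → 0` at `0⁺` the mean value theorem gives `a(t)^m ≤ m A t`. Hence the integrand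
`c₀ aⁿ / a = c₀ / a^m` dominates `c₀ / (m A t)`, whose integral over `(0, t₀]` diverges
logarithmically.
-/

open MeasureTheory Filter Set Topology

theorem le_mul_of_hasDerivAt_le_of_tendsto_zero {f f' : ℝ → ℝ} {T B : ℝ}
    (hf : ∀ t ∈ Ioc 0 T, HasDerivAt f (f' t) t) (hf' : ∀ t ∈ Ioc 0 T, f' t ≤ B)
    (hlim : Tendsto f (𝓝[>] 0) (𝓝 0)) : ∀ t ∈ Ioc 0 T, f t ≤ B * t := by
  intro t ht
  have hsub : ∀ ε ∈ Ioo 0 t, Icc ε t ⊆ Ioc 0 T := fun ε hε x hx =>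
    ⟨hε.1.trans_le hx.1, hx.2.trans ht.2⟩
  have hmvt : ∀ ε ∈ Ioo 0 t, f t ≤ B * (t - ε) + f ε := by
    intro ε hε
    have hderiv : ∀ x ∈ Icc ε t, HasDerivAt f (f' x) x := fun x hx => hf x (hsub ε hε hx)
    have := (convex_Icc ε t).image_sub_le_mul_sub_of_deriv_le
      (fun x hx => (hderiv x hx).continuousAt.continuousWithinAt)
      (fun x hx => (hderiv x (interior_subset hx)).differentiableAt.differentiableWithinAt)
      (fun x hx => (hderiv x (interior_subset hx)).deriv ▸ hf' x (hsub ε hε (interior_subset hx)))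
      ε (left_mem_Icc.2 hε.2.le) t (right_mem_Icc.2 hε.2.le) hε.2.le
    linarith
  have hrhs : Tendsto (fun ε => B * (t - ε) + f ε) (𝓝[>] 0) (𝓝 (B * (t - 0) + 0)) :=
    (tendsto_nhdsWithin_of_tendsto_nhds
      ((continuous_const.mul (continuous_const.sub continuous_id)).tendsto 0)).add hlim
  simpa using ge_of_tendsto hrhs (eventually_of_mem (Ioo_mem_nhdsGT ht.1) hmvt)

theorem rpow_one_sub_le_of_rpow_neg_mul_deriv_le {a a' : ℝ → ℝ} {T n A : ℝ} (hn : n < 1)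
    (hapos : ∀ t ∈ Ioc 0 T, 0 < a t) (hderiv : ∀ t ∈ Ioc 0 T, HasDerivAt a (a' t) t)
    (hlim : Tendsto a (𝓝[>] 0) (𝓝 0)) (hbound : ∀ t ∈ Ioc 0 T, a t ^ (-n) * a' t ≤ A) :
    ∀ t ∈ Ioc 0 T, a t ^ (1 - n) ≤ (1 - n) * A * t := by
  have hm : 0 < 1 - n := sub_pos.2 hn
  refine le_mul_of_hasDerivAt_le_of_tendsto_zero
    (fun t ht => (hderiv t ht).rpow_const (Or.inl (hapos t ht).ne')) (fun t ht => ?_) ?_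
  · rw [sub_sub_cancel_left]
    nlinarith [hbound t ht]
  · simpa [Real.zero_rpow hm.ne'] using hlim.rpow_const (Or.inr hm.le)

theorem lintegral_ofReal_const_mul_inv_Ioc_eq_top {C T : ℝ} (hC : 0 < C) (hT : 0 < T) :
    ∫⁻ t in Ioc 0 T, ENNReal.ofReal (C * t⁻¹) = ⊤ := by
  have hinv : ∫⁻ t in Ioc 0 T, ENNReal.ofReal t⁻¹ = ⊤ := by
    by_contra h
    have hint : IntegrableOn (fun t : ℝ => t⁻¹) (Ioc 0 T) :=
      (lintegral_ofReal_ne_top_iff_integrable measurable_inv.aestronglyMeasurable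
        ((ae_restrict_iff' measurableSet_Ioc).2 (Eventually.of_forall
          fun t ht => inv_nonneg.2 ht.1.le))).1 h
    have := (intervalIntegrable_iff_integrableOn_Ioc_of_le hT.le).2 hint
    simp [hT.ne] at this
  simp_rw [ENNReal.ofReal_mul hC.le]
  rw [lintegral_const_mul' _ _ ENNReal.ofReal_ne_top, hinv, ENNReal.mul_top (by simpa using hC)]

theorem div_rpow_one_sub_eq {x : ℝ} (hx : 0 < x) (c n : ℝ) : c / x ^ (1 - n) = c * x ^ n / x := by
  rw [Real.rpow_sub hx, Real.rpow_one]
  field_simp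

theorem stmt_11_general (t₀ : ℝ) (ht₀ : 0 < t₀) (n : ℝ) (hn : n < 0)
    (c₀ : ℝ) (hc₀ : 0 < c₀)
    (a a' : ℝ → ℝ) (hapos : ∀ t ∈ Set.Ioc 0 t₀, 0 < a t)
    (hderiv : ∀ t ∈ Set.Ioc 0 t₀, HasDerivAt a (a' t) t)
    (hlim : Filter.Tendsto a (nhdsWithin 0 (Set.Ioi 0)) (nhds 0))
    (A : ℝ) (hA : 0 < A)
    (hbound : ∀ t ∈ Set.Ioc 0 t₀, (a t) ^ (-n) * a' t ≤ A) :
    ∫⁻ t in Set.Ioc 0 t₀, ENNReal.ofReal (c₀ * (a t) ^ n / a t) = ⊤ := by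
  have hgrowth := rpow_one_sub_le_of_rpow_neg_mul_deriv_le (by linarith) hapos hderiv hlim hbound
  have hm : 0 < 1 - n := by linarith
  refine eq_top_mono (lintegral_mono_ae ((ae_restrict_iff' measurableSet_Ioc).2
    (Eventually.of_forall fun t ht => ENNReal.ofReal_le_ofReal ?_)))
    (lintegral_ofReal_const_mul_inv_Ioc_eq_top (C := c₀ / ((1 - n) * A)) (by positivity) ht₀)
  calc c₀ / ((1 - n) * A) * t⁻¹ = c₀ / ((1 - n) * A * t) := by field_simp
    _ ≤ c₀ / a t ^ (1 - n) :=
      div_le_div_of_nonneg_left hc₀.le (Real.rpow_pos_of_pos (hapos t ht) _) (hgrowth t ht)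
    _ = c₀ * a t ^ n / a t := div_rpow_one_sub_eq (hapos t ht) c₀ n

/-- No past particle horizon: if `a` is strictly increasing with `a → 0⁺`,
`a^{-n} ȧ ≤ A` and `n < 0`, then the horizon integral
`∫_0^{t₀} c₀ a(t)ⁿ/a(t) dt` diverges to `+∞`. -/
theorem stmt_11 (t₀ : ℝ) (ht₀ : 0 < t₀) (n : ℝ) (hn : n < 0)
    (c₀ : ℝ) (hc₀ : 0 < c₀)
    (a a' : ℝ → ℝ) (hapos : ∀ t ∈ Set.Ioc 0 t₀, 0 < a t)
    (hderiv : ∀ t ∈ Set.Ioc 0 t₀, HasDerivAt a (a' t) t)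
    (hmono : StrictMonoOn a (Set.Ioc 0 t₀))
    (hlim : Filter.Tendsto a (nhdsWithin 0 (Set.Ioi 0)) (nhds 0))
    (A : ℝ) (hA : 0 < A)
    (hbound : ∀ t ∈ Set.Ioc 0 t₀, (a t) ^ (-n) * a' t ≤ A) :
    ∫⁻ t in Set.Ioc 0 t₀, ENNReal.ofReal (c₀ * (a t) ^ n / a t) = ⊤ :=
  stmt_11_general t₀ ht₀ n hn c₀ hc₀ a a' hapos hderiv hlim A hA hbound
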